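/- Let c₀ be a metric cost vector on K_n with TOUR(c₀) = 1, and let x̄ be an optimal solution of the subtour elimination LP with objective c₀. Let c₁ be any optimal solution of the problem H-OPT(x̄): minimize Σ_{e} x̄_e c_e over cost vectors c ≥ 0 satisfying all triangle inequalities and satisfying Σ_e z̄_e c_e ≥ 1 for the incidence vector z̄ of every Hamiltonian tour of K_n. Then TOUR(c₁)/SUBT(c₁) ≥ TOUR(c₀)/SUBT(c₀). -/
import Mathlib


open Finset

noncomputable section

/-- Cost of the Hamiltonian tour of `K n` visiting `t 0, t 1, ..., t (n-1)` cyclically. -/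
def tourCost (n : ℕ) (c : Fin n → Fin n → ℝ) (t : Equiv.Perm (Fin n)) : ℝ :=
  ∑ i : Fin n, c (t i) (t (finRotate n i))

/-- `TOUR(c)`: minimum cost of a Hamiltonian tour of `K n`. -/
def TOUR (n : ℕ) (c : Fin n → Fin n → ℝ) : ℝ :=
  sInf {x : ℝ | ∃ t : Equiv.Perm (Fin n), x = tourCost n c t}

/-- Edge-wise objective `∑_{e∈E} a_e b_e`, summing over edges `{i,j}` with `i < j`. -/
def edgeObj (n : ℕ) (a b : Fin n → Fin n → ℝ) : ℝ :=
  ∑ i : Fin n, ∑ j ∈ Finset.univ.filter (fun j => i < j), a i j * b i j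

/-- Membership in the subtour elimination polytope `P_SEP`. -/
def InSEP (n : ℕ) (x : Fin n → Fin n → ℝ) : Prop :=
  (∀ i j, x i j = x j i) ∧ (∀ i j, 0 ≤ x i j) ∧ (∀ i j, x i j ≤ 1) ∧
  (∀ i, x i i = 0) ∧
  (∀ v : Fin n, ∑ j ∈ Finset.univ.filter (fun j => j ≠ v), x v j = 2) ∧
  (∀ S : Finset (Fin n), 3 ≤ S.card → S.card ≤ n - 3 →
    2 ≤ ∑ i ∈ S, ∑ j ∈ Sᶜ, x i j)

/-- `SUBT(c)`: optimal value of the subtour elimination LP. -/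
def SUBT (n : ℕ) (c : Fin n → Fin n → ℝ) : ℝ :=
  sInf {y : ℝ | ∃ x : Fin n → Fin n → ℝ, InSEP n x ∧ y = edgeObj n c x}

/-- A metric cost vector: nonnegative, symmetric and satisfying triangle inequalities. -/
def IsMetric (n : ℕ) (c : Fin n → Fin n → ℝ) : Prop :=
  (∀ i j, 0 ≤ c i j) ∧ (∀ i j, c i j = c j i) ∧
  (∀ i j k : Fin n, i ≠ j → j ≠ k → i ≠ k → c i j ≤ c i k + c k j)

/-- Feasibility for the LP `H-OPT(x̄)` (constraints do not depend on `x̄`). -/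
def HOptFeasible (n : ℕ) (c : Fin n → Fin n → ℝ) : Prop :=
  IsMetric n c ∧ ∀ t : Equiv.Perm (Fin n), 1 ≤ tourCost n c t

theorem stmt1 (n : ℕ) (hn : 3 ≤ n) (c₀ xb c₁ : Fin n → Fin n → ℝ)
    (hm0 : IsMetric n c₀) (ht0 : TOUR n c₀ = 1)
    (hxfeas : InSEP n xb) (hxopt : edgeObj n c₀ xb = SUBT n c₀)
    (hc1feas : HOptFeasible n c₁)
    (hc1opt : ∀ c : Fin n → Fin n → ℝ, HOptFeasible n c →
      edgeObj n xb c₁ ≤ edgeObj n xb c)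
    (hs0 : 0 < SUBT n c₀) (hs1 : 0 < SUBT n c₁) :
    TOUR n c₀ / SUBT n c₀ ≤ TOUR n c₁ / SUBT n c₁ := by
  have hsymm : ∀ a b : Fin n → Fin n → ℝ, edgeObj n a b = edgeObj n b a := by
    intro a b
    exact Finset.sum_congr rfl fun i _ => Finset.sum_congr rfl fun j _ => mul_comm _ _
  have hbdd0 : BddBelow {x : ℝ | ∃ t : Equiv.Perm (Fin n), x = tourCost n c₀ t} := by
    refine ⟨0, ?_⟩; rintro x ⟨t, rfl⟩
    exact Finset.sum_nonneg fun i _ => hm0.1 _ _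
  have htour0 : ∀ t, 1 ≤ tourCost n c₀ t := fun t => ht0 ▸ csInf_le hbdd0 ⟨t, rfl⟩
  have hle : edgeObj n xb c₁ ≤ edgeObj n xb c₀ := hc1opt c₀ ⟨hm0, htour0⟩
  have hS1 : SUBT n c₁ ≤ edgeObj n c₁ xb := by
    apply csInf_le
    · refine ⟨0, ?_⟩; rintro y ⟨x, hx, rfl⟩
      exact Finset.sum_nonneg fun i _ => Finset.sum_nonneg fun j _ =>
        mul_nonneg (hc1feas.1.1 _ _) (hx.2.1 _ _)
    · exact ⟨xb, hxfeas, rfl⟩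
  have hSle : SUBT n c₁ ≤ SUBT n c₀ := by
    calc SUBT n c₁ ≤ edgeObj n c₁ xb := hS1
    _ = edgeObj n xb c₁ := hsymm _ _
    _ ≤ edgeObj n xb c₀ := hle
    _ = edgeObj n c₀ xb := hsymm _ _
    _ = SUBT n c₀ := hxopt
  have hT1 : 1 ≤ TOUR n c₁ := by
    refine le_csInf ⟨tourCost n c₁ 1, ⟨1, rfl⟩⟩ ?_
    rintro x ⟨t, rfl⟩; exact hc1feas.2 t
  rw [ht0]
  calc 1 / SUBT n c₀ ≤ 1 / SUBT n c₁ := one_div_le_one_div_of_le hs1 hSle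
  _ ≤ TOUR n c₁ / SUBT n c₁ := by gcongr
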